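/- In the setting of the previous identity (σ : ℝ^d → ℝ^{d×m} of class C², Z : [0,T] → ℝ^m of class C¹, and X^i_{st}, 𝕃^i_{st}, B¹_{st}, B²_{st} defined from σ and Z via ℤ^{μν}_{st} = ∫_s^t ż^μ(r)(Z^ν(r) − Z^ν(s)) dr), assume additionally that the vector fields σ̂_μ = Σ_j σ^j_μ ∂_j commute pairwise, i.e. Σ_j (σ^j_ν ∂_j σ^i_μ − σ^j_μ ∂_j σ^i_ν) = 0 on ℝ^d for all i, μ, ν. Then the bracket vanishes: for every twice continuously differentiable f : ℝ^d → ℝ and every (s,t) ∈ Δ_T, B²_{st} f = ½ B¹_{st}(B¹_{st} f) pointwise on ℝ^d. -/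

import Mathlib

/-- The `i`-th partial derivative of `f : ℝ^d → ℝ` at `x`. -/
noncomputable def partialD (d : ℕ) (f : (Fin d → ℝ) → ℝ) (i : Fin d)
    (x : Fin d → ℝ) : ℝ :=
  fderiv ℝ f x (Pi.single i 1)

/-- The iterated integral `ℤ^{μν}_{st} = ∫_s^t ż^μ(r) (Z^ν(r) − Z^ν(s)) dr`. -/
noncomputable def iterZ (m : ℕ) (Z zdot : ℝ → Fin m → ℝ) (s t : ℝ)
    (μ ν : Fin m) : ℝ :=
  ∫ r in s..t, zdot r μ * (Z r ν - Z s ν)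

/-- The coefficient `X^i_{st}(x) = Σ_μ σ^i_μ(x)(Z^μ(t) − Z^μ(s))`. -/
noncomputable def Xcoeff (d m : ℕ) (σ : (Fin d → ℝ) → Fin d → Fin m → ℝ)
    (Z : ℝ → Fin m → ℝ) (s t : ℝ) (x : Fin d → ℝ) (i : Fin d) : ℝ :=
  ∑ μ : Fin m, σ x i μ * (Z t μ - Z s μ)

/-- The coefficient `𝕃^i_{st}(x) = Σ_{μ,ν,j} ℤ^{μν}_{st} ∂_j σ^i_μ(x) σ^j_ν(x)`. -/
noncomputable def Lcoeff (d m : ℕ) (σ : (Fin d → ℝ) → Fin d → Fin m → ℝ)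
    (Z zdot : ℝ → Fin m → ℝ) (s t : ℝ) (x : Fin d → ℝ) (i : Fin d) : ℝ :=
  ∑ μ : Fin m, ∑ ν : Fin m, ∑ j : Fin d,
    iterZ m Z zdot s t μ ν * partialD d (fun y => σ y i μ) j x * σ x j ν

/-- The first-order operator `B¹_{st} f = Σ_i X^i_{st} ∂_i f`. -/
noncomputable def opB1 (d m : ℕ) (σ : (Fin d → ℝ) → Fin d → Fin m → ℝ)
    (Z : ℝ → Fin m → ℝ) (s t : ℝ) (f : (Fin d → ℝ) → ℝ) (x : Fin d → ℝ) : ℝ :=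
  ∑ i : Fin d, Xcoeff d m σ Z s t x i * partialD d f i x

/-- The second-order operator
`B²_{st} f = ½ Σ_{i,j} X^i_{st} X^j_{st} ∂_{ij} f + Σ_i 𝕃^i_{st} ∂_i f`. -/
noncomputable def opB2 (d m : ℕ) (σ : (Fin d → ℝ) → Fin d → Fin m → ℝ)
    (Z zdot : ℝ → Fin m → ℝ) (s t : ℝ) (f : (Fin d → ℝ) → ℝ) (x : Fin d → ℝ) : ℝ :=
  (1 / 2) * ∑ i : Fin d, ∑ j : Fin d,
      Xcoeff d m σ Z s t x i * Xcoeff d m σ Z s t x j *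
        partialD d (fun y => partialD d f j y) i x
    + ∑ i : Fin d, Lcoeff d m σ Z zdot s t x i * partialD d f i x

/-!
Write `δ_μ = Z^μ(t) − Z^μ(s)`. Since `∂_i X^j = Σ_μ δ_μ ∂_i σ^j_μ`, the product rule gives
`B¹(B¹ f) = Σ_{i,j} X^i X^j ∂_{ij} f + Σ_j (Σ_i X^i ∂_i X^j) ∂_j f`, and
`Σ_i X^i ∂_i X^j = Σ_{μ,ν} δ_μ δ_ν A^j_{μν}` with `A^j_{μν} = Σ_i σ^i_ν ∂_i σ^j_μ`.
Commutation of the vector fields says exactly that `A^j` is symmetric, while integration by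
parts gives `ℤ^{μν} + ℤ^{νμ} = δ_μ δ_ν`; hence `Σ_{μ,ν} δ_μ δ_ν A^j_{μν} = 2 Σ_{μ,ν} ℤ^{μν} A^j_{μν}
= 2 𝕃^j`.
-/

section PartialD

variable {d : ℕ} {x : Fin d → ℝ}

lemma partialD_sum {ι : Type*} (u : Finset ι) {g : ι → (Fin d → ℝ) → ℝ} (i : Fin d)
    (hg : ∀ k ∈ u, DifferentiableAt ℝ (g k) x) :
    partialD d (fun y => ∑ k ∈ u, g k y) i x = ∑ k ∈ u, partialD d (g k) i x := by
  rw [partialD, fderiv_fun_sum hg, sum_apply]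
  rfl

lemma partialD_mul {a b : (Fin d → ℝ) → ℝ} (i : Fin d)
    (ha : DifferentiableAt ℝ a x) (hb : DifferentiableAt ℝ b x) :
    partialD d (fun y => a y * b y) i x
      = partialD d a i x * b x + a x * partialD d b i x := by
  simp only [partialD, fderiv_fun_mul ha hb, add_apply, smul_apply, smul_eq_mul]
  ring

lemma partialD_mul_const {a : (Fin d → ℝ) → ℝ} (c : ℝ) (i : Fin d)
    (ha : DifferentiableAt ℝ a x) :
    partialD d (fun y => a y * c) i x = partialD d a i x * c := by
  rw [partialD, partialD, fderiv_mul_const ha, smul_apply, smul_eq_mul, mul_comm]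

lemma differentiable_partialD {f : (Fin d → ℝ) → ℝ} {n : WithTop ℕ∞} (hf : ContDiff ℝ n f)
    (hn : 2 ≤ n) (j : Fin d) : Differentiable ℝ fun y => partialD d f j y :=
  ((hf.fderiv_right (m := 1) hn).clm_apply contDiff_const).differentiable one_ne_zero

end PartialD

lemma iterZ_add_iterZ_swap {m : ℕ} {Z zdot : ℝ → Fin m → ℝ}
    (hZ : ∀ (μ : Fin m) (r : ℝ), HasDerivAt (fun u => Z u μ) (zdot r μ) r)
    (hzdot : ∀ μ : Fin m, Continuous fun r => zdot r μ) (s t : ℝ) (μ ν : Fin m) :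
    iterZ m Z zdot s t μ ν + iterZ m Z zdot s t ν μ
      = (Z t μ - Z s μ) * (Z t ν - Z s ν) := by
  have parts := intervalIntegral.integral_mul_deriv_eq_deriv_mul
    (fun r _ => (hZ ν r).sub_const (Z s ν)) (fun r _ => (hZ μ r).sub_const (Z s μ))
    ((hzdot ν).intervalIntegrable s t) ((hzdot μ).intervalIntegrable s t)
  simp only [sub_self, zero_mul, sub_zero] at parts
  simp only [iterZ, mul_comm (zdot _ μ), parts]
  ring

lemma sum_sum_mul_mul_of_add_swap {ι R : Type*} [Fintype ι] [CommSemiring R]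
    {c A : ι → ι → R} {p : ι → R}
    (hc : ∀ μ ν, c μ ν + c ν μ = p μ * p ν) (hA : ∀ μ ν, A μ ν = A ν μ) :
    ∑ μ, ∑ ν, p μ * p ν * A μ ν = 2 * ∑ μ, ∑ ν, c μ ν * A μ ν := by
  have swap : ∑ μ, ∑ ν, c ν μ * A μ ν = ∑ μ, ∑ ν, c μ ν * A μ ν := by
    rw [Finset.sum_comm]
    simp only [hA]
  simp only [← hc, add_mul, Finset.sum_add_distrib, swap]
  ring

section Operators

variable {d m : ℕ} {σ : (Fin d → ℝ) → Fin d → Fin m → ℝ} {Z : ℝ → Fin m → ℝ} {s t : ℝ}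
  {x : Fin d → ℝ}

lemma differentiableAt_Xcoeff {j : Fin d}
    (hσ : ∀ μ, DifferentiableAt ℝ (fun y => σ y j μ) x) :
    DifferentiableAt ℝ (fun y => Xcoeff d m σ Z s t y j) x :=
  DifferentiableAt.fun_sum fun μ _ => (hσ μ).mul_const _

lemma partialD_Xcoeff {j : Fin d} (hσ : ∀ μ, DifferentiableAt ℝ (fun y => σ y j μ) x)
    (i : Fin d) :
    partialD d (fun y => Xcoeff d m σ Z s t y j) i x
      = ∑ μ, partialD d (fun y => σ y j μ) i x * (Z t μ - Z s μ) := by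
  simp only [Xcoeff]
  rw [partialD_sum _ _ fun μ _ => (hσ μ).mul_const _]
  exact Finset.sum_congr rfl fun μ _ => partialD_mul_const _ _ (hσ μ)

lemma partialD_opB1 {f : (Fin d → ℝ) → ℝ}
    (hσ : ∀ j μ, DifferentiableAt ℝ (fun y => σ y j μ) x)
    (hf : ∀ j, DifferentiableAt ℝ (fun y => partialD d f j y) x) (i : Fin d) :
    partialD d (fun y => opB1 d m σ Z s t f y) i x
      = ∑ j, (partialD d (fun y => Xcoeff d m σ Z s t y j) i x * partialD d f j x
          + Xcoeff d m σ Z s t x j * partialD d (fun y => partialD d f j y) i x) := by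
  simp only [opB1]
  rw [partialD_sum _ _ fun j _ => (differentiableAt_Xcoeff (hσ j)).fun_mul (hf j)]
  exact Finset.sum_congr rfl fun j _ => partialD_mul _ (differentiableAt_Xcoeff (hσ j)) (hf j)

lemma opB1_opB1 {f : (Fin d → ℝ) → ℝ}
    (hσ : ∀ j μ, DifferentiableAt ℝ (fun y => σ y j μ) x)
    (hf : ∀ j, DifferentiableAt ℝ (fun y => partialD d f j y) x) :
    opB1 d m σ Z s t (fun y => opB1 d m σ Z s t f y) x
      = ∑ i, ∑ j, Xcoeff d m σ Z s t x i * Xcoeff d m σ Z s t x j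
            * partialD d (fun y => partialD d f j y) i x
        + ∑ j, (∑ i, Xcoeff d m σ Z s t x i
            * partialD d (fun y => Xcoeff d m σ Z s t y j) i x) * partialD d f j x := by
  rw [opB1]
  simp only [partialD_opB1 hσ hf, Finset.mul_sum, Finset.sum_mul, mul_add,
    Finset.sum_add_distrib]
  rw [add_comm]
  congr 1
  · simp only [mul_assoc]
  · rw [Finset.sum_comm]
    simp only [mul_assoc]

lemma sum_Xcoeff_mul_partialD_Xcoeff {zdot : ℝ → Fin m → ℝ}
    (hZ : ∀ (μ : Fin m) (r : ℝ), HasDerivAt (fun u => Z u μ) (zdot r μ) r)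
    (hzdot : ∀ μ : Fin m, Continuous fun r => zdot r μ) {j : Fin d}
    (hcomm : ∀ μ ν, ∑ i, (σ x i ν * partialD d (fun y => σ y j μ) i x
        - σ x i μ * partialD d (fun y => σ y j ν) i x) = 0)
    (hσ : ∀ μ, DifferentiableAt ℝ (fun y => σ y j μ) x) :
    ∑ i, Xcoeff d m σ Z s t x i * partialD d (fun y => Xcoeff d m σ Z s t y j) i x
      = 2 * Lcoeff d m σ Z zdot s t x j := by
  set A : Fin m → Fin m → ℝ := fun μ ν => ∑ i, σ x i ν * partialD d (fun y => σ y j μ) i x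
  have hA : ∀ μ ν, A μ ν = A ν μ := fun μ ν => by
    simpa only [Finset.sum_sub_distrib, sub_eq_zero] using hcomm μ ν
  calc ∑ i, Xcoeff d m σ Z s t x i * partialD d (fun y => Xcoeff d m σ Z s t y j) i x
      = ∑ i, ∑ μ, ∑ ν, (Z t μ - Z s μ) * (Z t ν - Z s ν)
          * (σ x i ν * partialD d (fun y => σ y j μ) i x) := by
        refine Finset.sum_congr rfl fun i _ => ?_
        rw [partialD_Xcoeff hσ, Xcoeff, Finset.sum_mul_sum, Finset.sum_comm]
        exact Finset.sum_congr rfl fun μ _ => Finset.sum_congr rfl fun ν _ => by ring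
    _ = ∑ μ, ∑ ν, (Z t μ - Z s μ) * (Z t ν - Z s ν) * A μ ν := by
        simp only [A, Finset.mul_sum]
        exact Finset.sum_comm_cycle.symm
    _ = 2 * ∑ μ, ∑ ν, iterZ m Z zdot s t μ ν * A μ ν :=
        sum_sum_mul_mul_of_add_swap (iterZ_add_iterZ_swap hZ hzdot s t) hA
    _ = 2 * Lcoeff d m σ Z zdot s t x j := by
        simp only [Lcoeff, A, Finset.mul_sum]
        exact Finset.sum_congr rfl fun μ _ => Finset.sum_congr rfl fun ν _ =>
          Finset.sum_congr rfl fun i _ => by ring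

end Operators

theorem bracket_vanishes_of_commuting_general (T : ℝ) (d m : ℕ)
    (σ : (Fin d → ℝ) → Fin d → Fin m → ℝ) (hσ : ContDiff ℝ 2 fun x => σ x)
    (Z zdot : ℝ → Fin m → ℝ)
    (hZ : ∀ (μ : Fin m) (r : ℝ), HasDerivAt (fun u => Z u μ) (zdot r μ) r)
    (hzdot : ∀ μ : Fin m, Continuous fun r => zdot r μ)
    (hcomm : ∀ (i : Fin d) (μ ν : Fin m) (x : Fin d → ℝ),
      ∑ j : Fin d, (σ x j ν * partialD d (fun y => σ y i μ) j x
        - σ x j μ * partialD d (fun y => σ y i ν) j x) = 0) :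
    ∀ f : (Fin d → ℝ) → ℝ, ContDiff ℝ 2 f →
      ∀ s t : ℝ, 0 ≤ s → s ≤ t → t ≤ T → ∀ x : Fin d → ℝ,
        opB2 d m σ Z zdot s t f x
          = (1 / 2) * opB1 d m σ Z s t (fun y => opB1 d m σ Z s t f y) x := by
  intro f hf s t _ _ _ x
  have hσd : ∀ j μ, DifferentiableAt ℝ (fun y => σ y j μ) x := fun j μ =>
    ((contDiff_pi.mp (contDiff_pi.mp hσ j) μ).differentiable (by norm_num)) x
  have hfd : ∀ j, DifferentiableAt ℝ (fun y => partialD d f j y) x := fun j =>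
    differentiable_partialD hf le_rfl j x
  rw [opB1_opB1 hσd hfd, opB2]
  simp only [sum_Xcoeff_mul_partialD_Xcoeff hZ hzdot (hcomm _ · · x) (hσd _)]
  rw [mul_add]
  congr 1
  rw [Finset.mul_sum]
  exact Finset.sum_congr rfl fun j _ => by ring

/-- If the vector fields `σ̂_μ = Σ_j σ^j_μ ∂_j` commute pairwise, then the bracket of
the canonical lift vanishes: `B²_{st} f = ½ B¹_{st}(B¹_{st} f)` for every `C²`
function `f` and every `(s,t) ∈ Δ_T`. -/
theorem bracket_vanishes_of_commuting (T : ℝ) (hT : 0 < T) (d m : ℕ)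
    (σ : (Fin d → ℝ) → Fin d → Fin m → ℝ) (hσ : ContDiff ℝ 2 fun x => σ x)
    (Z zdot : ℝ → Fin m → ℝ)
    (hZ : ∀ (μ : Fin m) (r : ℝ), HasDerivAt (fun u => Z u μ) (zdot r μ) r)
    (hzdot : ∀ μ : Fin m, Continuous fun r => zdot r μ)
    (hcomm : ∀ (i : Fin d) (μ ν : Fin m) (x : Fin d → ℝ),
      ∑ j : Fin d, (σ x j ν * partialD d (fun y => σ y i μ) j x
        - σ x j μ * partialD d (fun y => σ y i ν) j x) = 0) :
    ∀ f : (Fin d → ℝ) → ℝ, ContDiff ℝ 2 f →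
      ∀ s t : ℝ, 0 ≤ s → s ≤ t → t ≤ T → ∀ x : Fin d → ℝ,
        opB2 d m σ Z zdot s t f x
          = (1 / 2) * opB1 d m σ Z s t (fun y => opB1 d m σ Z s t f y) x :=
  bracket_vanishes_of_commuting_general T d m σ hσ Z zdot hZ hzdot hcomm
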